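/- Let Q be a real number with Q > 1/2 + Σ_{i=1}^k q_i. If there exists an integer S with R ≤ S < R + 2^r such that no subset I ⊆ {1, …, k} satisfies Σ_{i∈I} q_i = S, then the game has a pure Nash equilibrium. (Take w = S, w_0 = 0, z = S, z_0 = 1, and (z_1, …, z_k) maximizing Σ_{i=1}^k q_i·z_i subject to (1/2) + Σ_{i=1}^k q_i·z_i ≤ S; since z_0 = 1, Player W's payoff is identically 0, so every strategy of W is optimal.) -/

import Mathlib

open MeasureTheory

noncomputable section

/-- Player Z's strategy set `X_Z`: tuples `(z, z₀, (z₁,…,z_k))` with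
`R ≤ z ≤ R + 2^r − 1`, each `zᵢ ∈ {0,1}`, and `(1/2)·z₀ + Σᵢ qᵢ·zᵢ ≤ z`. -/
def inXZ (k : ℕ) (q : Fin k → ℕ) (R r : ℕ) (s : ℤ × ℤ × (Fin k → ℤ)) : Prop :=
  (R : ℤ) ≤ s.1 ∧ s.1 ≤ (R : ℤ) + 2 ^ r - 1 ∧
  (s.2.1 = 0 ∨ s.2.1 = 1) ∧ (∀ i, s.2.2 i = 0 ∨ s.2.2 i = 1) ∧
  (1 / 2 : ℝ) * (s.2.1 : ℝ) + ∑ i, (q i : ℝ) * (s.2.2 i : ℝ) ≤ (s.1 : ℝ)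

/-- Player W's strategy set `X_W`: pairs `(w, w₀)` with `R ≤ w ≤ R + 2^r − 1`,
`w` an integer and `w₀` an arbitrary real number. -/
def inXW (R r : ℕ) (t : ℤ × ℝ) : Prop :=
  (R : ℤ) ≤ t.1 ∧ t.1 ≤ (R : ℤ) + 2 ^ r - 1

/-- Player Z's payoff `Π_Z = (1/2)·z₀ + Σᵢ qᵢ·zᵢ + Q·z·(2w − z)`. -/
def payZ (k : ℕ) (q : Fin k → ℕ) (Q : ℝ) (s : ℤ × ℤ × (Fin k → ℤ)) (t : ℤ × ℝ) : ℝ :=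
  (1 / 2 : ℝ) * (s.2.1 : ℝ) + ∑ i, (q i : ℝ) * (s.2.2 i : ℝ)
    + Q * (s.1 : ℝ) * (2 * (t.1 : ℝ) - (s.1 : ℝ))

/-- Player W's payoff `Π_W = (1 − z₀)·w₀`. -/
def payW (k : ℕ) (s : ℤ × ℤ × (Fin k → ℤ)) (t : ℤ × ℝ) : ℝ :=
  (1 - (s.2.1 : ℝ)) * t.2

/-- A pure Nash equilibrium: each player's strategy is feasible and maximizes
that player's payoff over their own strategy set, the other strategy held fixed. -/
def pureNE (k : ℕ) (q : Fin k → ℕ) (R r : ℕ) (Q : ℝ)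
    (s : ℤ × ℤ × (Fin k → ℤ)) (t : ℤ × ℝ) : Prop :=
  inXZ k q R r s ∧ inXW R r t ∧
  (∀ s' : ℤ × ℤ × (Fin k → ℤ), inXZ k q R r s' → payZ k q Q s' t ≤ payZ k q Q s t) ∧
  (∀ t' : ℤ × ℝ, inXW R r t' → payW k s t' ≤ payW k s t)

/-! Player Z plays `z = w = S`, `z₀ = 1` and a subset `I` of maximal sum among those with sum
at most `S`. As `S` is not a subset sum, `Σ_I qᵢ ≤ S − 1`, which leaves room for `z₀/2`; and
with `z₀ = 1` Player W's payoff vanishes identically. Writing `z(2w − z) = w² − (z − w)²`, a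
deviation of Z to `z ≠ w` loses at least `Q`, more than the linear part of `Π_Z` can gain,
while a deviation with `z = w` keeps a subset sum at most `S`, hence at most `Σ_I qᵢ`. -/

section SubsetSum

variable {ι : Type*} [Fintype ι]

theorem Finset.exists_max_sum_le (q : ι → ℕ) {S : ℤ} (hS : 0 ≤ S) :
    ∃ I : Finset ι, ∑ i ∈ I, (q i : ℤ) ≤ S ∧
      ∀ J : Finset ι, ∑ i ∈ J, (q i : ℤ) ≤ S → ∑ i ∈ J, (q i : ℤ) ≤ ∑ i ∈ I, (q i : ℤ) := by
  obtain ⟨I, hI, hmax⟩ :=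
    (Finset.univ.filter fun J : Finset ι => ∑ i ∈ J, (q i : ℤ) ≤ S).exists_max_image
      (fun J => ∑ i ∈ J, (q i : ℤ)) ⟨∅, by simpa using hS⟩
  exact ⟨I, (Finset.mem_filter.mp hI).2, fun J hJ => hmax J (by simpa using hJ)⟩

theorem sum_mul_eq_sum_filter_of_binary (q : ι → ℕ) {x : ι → ℤ}
    (hx : ∀ i, x i = 0 ∨ x i = 1) :
    ∑ i, (q i : ℝ) * (x i : ℝ) = ∑ i ∈ Finset.univ.filter (x · = 1), (q i : ℝ) := by
  rw [Finset.sum_filter]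
  refine Finset.sum_congr rfl fun i _ => ?_
  rcases hx i with h | h <;> simp [h]

theorem sum_mul_le_sum_of_binary (q : ι → ℕ) {x : ι → ℤ} (hx : ∀ i, x i = 0 ∨ x i = 1) :
    ∑ i, (q i : ℝ) * (x i : ℝ) ≤ ∑ i, (q i : ℝ) := by
  rw [sum_mul_eq_sum_filter_of_binary q hx]
  exact Finset.sum_le_sum_of_subset_of_nonneg (Finset.subset_univ _) fun i _ _ => by positivity

theorem sum_mul_indicator (q : ι → ℕ) (I : Finset ι) [DecidablePred (· ∈ I)] :
    ∑ i, (q i : ℝ) * ((if i ∈ I then 1 else 0 : ℤ) : ℝ) = ∑ i ∈ I, (q i : ℝ) := by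
  simp

end SubsetSum

section Game

variable {k : ℕ} {q : Fin k → ℕ} {R r : ℕ} {Q : ℝ}

def strategyZ (S : ℤ) (I : Finset (Fin k)) : ℤ × ℤ × (Fin k → ℤ) :=
  (S, 1, fun i => if i ∈ I then 1 else 0)

theorem payZ_eq_sub_sq (s : ℤ × ℤ × (Fin k → ℤ)) (t : ℤ × ℝ) :
    payZ k q Q s t = 1 / 2 * (s.2.1 : ℝ) + ∑ i, (q i : ℝ) * (s.2.2 i : ℝ)
      + Q * ((t.1 : ℝ) ^ 2 - ((s.1 : ℝ) - t.1) ^ 2) := by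
  unfold payZ; ring

theorem payZ_strategyZ (S : ℤ) (I : Finset (Fin k)) (w₀ : ℝ) :
    payZ k q Q (strategyZ S I) (S, w₀) = 1 / 2 + ∑ i ∈ I, (q i : ℝ) + Q * (S : ℝ) ^ 2 := by
  simp only [payZ_eq_sub_sq, strategyZ, sum_mul_indicator]
  push_cast
  ring

theorem inXZ_strategyZ {S : ℤ} {I : Finset (Fin k)} (hRS : (R : ℤ) ≤ S)
    (hSR : S < R + 2 ^ r) (hIS : ∑ i ∈ I, (q i : ℤ) < S) :
    inXZ k q R r (strategyZ S I) := by
  unfold inXZ strategyZ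
  refine ⟨hRS, by omega, Or.inr rfl, fun i => by by_cases h : i ∈ I <;> simp [h], ?_⟩
  have : ((∑ i ∈ I, (q i : ℤ) : ℤ) : ℝ) ≤ S - 1 := by exact_mod_cast Int.le_sub_one_of_lt hIS
  simp only [sum_mul_indicator]
  push_cast at this ⊢
  linarith

theorem payZ_lt_of_ne (hQ : Q > 1 / 2 + ∑ i, (q i : ℝ)) {s : ℤ × ℤ × (Fin k → ℤ)}
    (hs : inXZ k q R r s) {t : ℤ × ℝ} (hst : s.1 ≠ t.1) :
    payZ k q Q s t < Q * (t.1 : ℝ) ^ 2 := by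
  obtain ⟨-, -, hz₀, hx, -⟩ := hs
  have hz₀_le : (s.2.1 : ℝ) ≤ 1 := by rcases hz₀ with h | h <;> simp [h]
  have hgap : (1 : ℝ) ≤ ((s.1 : ℝ) - t.1) ^ 2 := by
    have : (1 : ℤ) ≤ (s.1 - t.1) ^ 2 := by
      nlinarith [sq_nonneg (s.1 - t.1), Int.one_le_abs (sub_ne_zero.mpr hst), sq_abs (s.1 - t.1)]
    exact_mod_cast this
  have hsum := sum_mul_le_sum_of_binary q hx
  have hQ_pos : 0 < Q := by
    have : (0 : ℝ) ≤ ∑ i, (q i : ℝ) := by positivity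
    linarith
  rw [payZ_eq_sub_sq]
  nlinarith [mul_le_mul_of_nonneg_left hgap hQ_pos.le]

theorem payZ_le_strategyZ_of_eq {S : ℤ} {I : Finset (Fin k)}
    (hImax : ∀ J : Finset (Fin k),
      ∑ i ∈ J, (q i : ℤ) ≤ S → ∑ i ∈ J, (q i : ℤ) ≤ ∑ i ∈ I, (q i : ℤ))
    {s : ℤ × ℤ × (Fin k → ℤ)} (hs : inXZ k q R r s) (hsS : s.1 = S) (w₀ : ℝ) :
    payZ k q Q s (S, w₀) ≤ payZ k q Q (strategyZ S I) (S, w₀) := by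
  obtain ⟨-, -, hz₀, hx, hbudget⟩ := hs
  set J := Finset.univ.filter (s.2.2 · = 1)
  rw [sum_mul_eq_sum_filter_of_binary q hx, hsS] at hbudget
  have hz₀_mem : (0 : ℝ) ≤ s.2.1 ∧ (s.2.1 : ℝ) ≤ 1 := by rcases hz₀ with h | h <;> simp [h]
  have hJI : ∑ i ∈ J, (q i : ℝ) ≤ ∑ i ∈ I, (q i : ℝ) := by
    have hJS : ∑ i ∈ J, (q i : ℤ) ≤ S := by
      have : ((∑ i ∈ J, (q i : ℤ) : ℤ) : ℝ) ≤ S := by push_cast; linarith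
      exact_mod_cast this
    exact_mod_cast hImax J hJS
  rw [payZ_strategyZ, payZ_eq_sub_sq, sum_mul_eq_sum_filter_of_binary q hx, hsS]
  simp only [sub_self]
  linarith

end Game

theorem stmt4_general (k : ℕ) (q : Fin k → ℕ) (R r : ℕ) (Q : ℝ)
    (hQ : Q > 1 / 2 + ∑ i, (q i : ℝ))
    (hS : ∃ S : ℤ, (R : ℤ) ≤ S ∧ S < (R : ℤ) + 2 ^ r ∧
      ¬ ∃ I : Finset (Fin k), (∑ i ∈ I, (q i : ℤ)) = S) :
    ∃ (s : ℤ × ℤ × (Fin k → ℤ)) (t : ℤ × ℝ), pureNE k q R r Q s t := by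
  obtain ⟨S, hRS, hSR, hS⟩ := hS
  obtain ⟨I, hIS, hImax⟩ := Finset.exists_max_sum_le q (S := S) (by omega)
  have hIS : ∑ i ∈ I, (q i : ℤ) < S := lt_of_le_of_ne hIS fun h => hS ⟨I, h⟩
  refine ⟨strategyZ S I, (S, 0), inXZ_strategyZ hRS hSR hIS, ⟨hRS, by omega⟩,
    fun s hs => ?_, fun t _ => by simp [payW, strategyZ]⟩
  by_cases hsS : s.1 = S
  · exact payZ_le_strategyZ_of_eq hImax hs hsS 0
  · have hI_nonneg : (0 : ℝ) ≤ ∑ i ∈ I, (q i : ℝ) := by positivity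
    have := payZ_lt_of_ne hQ hs (t := (S, 0)) hsS
    rw [payZ_strategyZ]
    linarith

/-- if `Q > 1/2 + Σᵢ qᵢ` and some integer `S` with
`R ≤ S < R + 2^r` is not a subset sum of the `qᵢ`, then the game has a pure
Nash equilibrium. -/
theorem stmt4 (k : ℕ) (q : Fin k → ℕ) (R r : ℕ) (Q : ℝ)
    (hq : ∀ i, 0 < q i) (hR : 0 < R) (hr : 0 < r) (hrk : r ≤ k)
    (hQ : Q > 1 / 2 + ∑ i, (q i : ℝ))
    (hS : ∃ S : ℤ, (R : ℤ) ≤ S ∧ S < (R : ℤ) + 2 ^ r ∧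
      ¬ ∃ I : Finset (Fin k), (∑ i ∈ I, (q i : ℤ)) = S) :
    ∃ (s : ℤ × ℤ × (Fin k → ℤ)) (t : ℤ × ℝ), pureNE k q R r Q s t :=
  stmt4_general k q R r Q hQ hS
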